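/- arXiv:1807.10125 — 2 statements merged into one kernel-verified Lean document; each statement's English description precedes it below -/
import Mathlib

section
/- If u is the unique real root of 2x³ + 40x² + 400x − 1 and u′ = (64u² + 1372u + 11680)/4389, then 231(u′)³ − 400(u′)² − 512u′ − 160 = 0. -/
theorem stmt3_general (u : ℝ) (hu : 2 * u ^ 3 + 40 * u ^ 2 + 400 * u - 1 = 0)
    (u' : ℝ) (hu' : u' = (64 * u ^ 2 + 1372 * u + 11680) / 4389) :
    231 * u' ^ 3 - 400 * u' ^ 2 - 512 * u' - 160 = 0 := by
  subst hu'
  -- The cofactor is the quotient of `4389³ · (231 u'³ - 400 u'² - 512 u' - 160)`, a sextic in `u`,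
  -- by `2u³ + 40u² + 400u - 1`; the remainder vanishes.
  linear_combination
    (30277632 * u ^ 3 + 1341677568 * u ^ 2 + 21836204544 * u + 149832698400) / 4389 ^ 3 * hu

theorem stmt3 (u : ℝ) (hu : 2 * u ^ 3 + 40 * u ^ 2 + 400 * u - 1 = 0)
    (huniq : ∀ x : ℝ, 2 * x ^ 3 + 40 * x ^ 2 + 400 * x - 1 = 0 → x = u)
    (u' : ℝ) (hu' : u' = (64 * u ^ 2 + 1372 * u + 11680) / 4389) :
    231 * u' ^ 3 - 400 * u' ^ 2 - 512 * u' - 160 = 0 :=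
  stmt3_general u hu u' hu'
end

section
/- Let k = θ₂²(q)/θ₃²(q) and k′ = θ₄²(q)/θ₃²(q) for 0 < q < 1. Then k² + (k′)² = 1. -/
/-! Everything follows from the duplication formulas
`θ₃(q)² = θ₃(q²)² + θ₂(q²)²`, `θ₄(q)² = θ₃(q²)² - θ₂(q²)²`, `θ₂(q)² = 2 θ₂(q²) θ₃(q²)`,
since then `θ₂(q)⁴ + θ₄(q)⁴ = (θ₃(q²)² + θ₂(q²)²)² = θ₃(q)⁴`. All three are instances of one
product formula for `∑ zⁿ q^((n+c)²)`, obtained by reindexing the double sum over `(m, n)` by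
`m = a + b + ε`, `n = a - b` with `ε ∈ {0, 1}` the parity of `m + n`, and using
`(a + b + c)² + (a - b + d)² = 2 (a + (c + d)/2)² + 2 (b + (c - d)/2)²`. -/

noncomputable def theta2R (q : ℝ) : ℝ := ∑' n : ℤ, q ^ (((n : ℝ) + 1 / 2) ^ 2)

noncomputable def theta3R (q : ℝ) : ℝ := ∑' n : ℤ, q ^ (((n : ℝ)) ^ 2)

noncomputable def theta4R (q : ℝ) : ℝ := ∑' n : ℤ, (-1 : ℝ) ^ n * q ^ (((n : ℝ)) ^ 2)

open Real

def Int.sumSubEquiv : Bool × ℤ × ℤ ≃ ℤ × ℤ where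
  toFun x := (x.2.1 + x.2.2 + (if x.1 then 1 else 0), x.2.1 - x.2.2)
  invFun p := if (p.1 + p.2) % 2 = 0 then (false, ((p.1 + p.2) / 2, (p.1 - p.2) / 2))
              else (true, ((p.1 + p.2 - 1) / 2, (p.1 - p.2 - 1) / 2))
  left_inv := by
    rintro ⟨_ | _, a, b⟩ <;> dsimp only <;> split_ifs <;> simp_all [Prod.mk.injEq] <;> omega
  right_inv := by
    rintro ⟨m, n⟩
    dsimp only
    split_ifs <;> simp_all [Prod.mk.injEq] <;> omega

theorem tsum_mul_tsum_eq_tsum_add_sub {R : Type*} [NormedRing R] [CompleteSpace R]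
    {f g : ℤ → R} (hf : Summable fun n => ‖f n‖) (hg : Summable fun n => ‖g n‖) :
    (∑' m, f m) * (∑' n, g n)
      = (∑' p : ℤ × ℤ, f (p.1 + p.2) * g (p.1 - p.2))
        + ∑' p : ℤ × ℤ, f (p.1 + p.2 + 1) * g (p.1 - p.2) := by
  have hfg := summable_mul_of_summable_norm hf hg
  have hsum : Summable fun x => f (Int.sumSubEquiv x).1 * g (Int.sumSubEquiv x).2 :=
    Int.sumSubEquiv.summable_iff.mpr hfg
  rw [tsum_mul_tsum_of_summable_norm hf hg, ← Int.sumSubEquiv.tsum_eq,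
    hsum.tsum_prod' fun b => hsum.comp_injective fun _ _ h => by simpa using h, tsum_bool]
  simp [Int.sumSubEquiv]

noncomputable def shiftedTheta (z c q : ℝ) : ℝ := ∑' n : ℤ, z ^ n * q ^ (((n : ℝ) + c) ^ 2)

section

variable {q : ℝ}

lemma summable_rpow_natCast_add_sq (hq0 : 0 < q) (hq1 : q < 1) (c : ℝ) :
    Summable fun n : ℕ => q ^ (((n : ℝ) + c) ^ 2) := by
  refine .of_nonneg_of_le (fun n => (rpow_pos_of_pos hq0 _).le) (fun n => ?_)
    ((summable_geometric_of_lt_one hq0.le hq1).mul_left (q ^ (-(c ^ 2 + 1))))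
  have hexp : (n : ℝ) - (c ^ 2 + 1) ≤ ((n : ℝ) + c) ^ 2 := by
    nlinarith [sq_nonneg ((n : ℝ) + c - 1 / 2), sq_nonneg (c + 1 / 2)]
  calc q ^ (((n : ℝ) + c) ^ 2) ≤ q ^ ((n : ℝ) - (c ^ 2 + 1)) :=
        rpow_le_rpow_of_exponent_ge hq0 hq1.le hexp
    _ = q ^ (-(c ^ 2 + 1)) * q ^ n := by
        rw [sub_eq_add_neg, rpow_add hq0, mul_comm, rpow_natCast]

lemma summable_rpow_intCast_add_sq (hq0 : 0 < q) (hq1 : q < 1) (c : ℝ) :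
    Summable fun n : ℤ => q ^ (((n : ℝ) + c) ^ 2) := by
  refine .of_nat_of_neg ((summable_rpow_natCast_add_sq hq0 hq1 c).congr fun n => ?_)
    ((summable_rpow_natCast_add_sq hq0 hq1 (-c)).congr fun n => ?_)
  · push_cast; ring_nf
  · push_cast; congr 1; ring

lemma summable_norm_shiftedTheta {z : ℝ} (hz : |z| = 1) (hq0 : 0 < q) (hq1 : q < 1) (c : ℝ) :
    Summable fun n : ℤ => ‖z ^ n * q ^ (((n : ℝ) + c) ^ 2)‖ :=
  (summable_rpow_intCast_add_sq hq0 hq1 c).congr fun n => by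
    rw [norm_mul, norm_zpow, Real.norm_eq_abs, hz, one_zpow, one_mul, Real.norm_eq_abs,
      abs_of_nonneg (rpow_nonneg hq0.le _)]

lemma rpow_mul_rpow_eq_sq_rpow_mul_sq_rpow (hq : 0 < q) {x y u v : ℝ}
    (h : x + y = 2 * u + 2 * v) : q ^ x * q ^ y = (q ^ 2) ^ u * (q ^ 2) ^ v := by
  simp only [← rpow_natCast q 2, ← rpow_mul hq.le, ← rpow_add hq, h, Nat.cast_ofNat]

lemma shiftedTheta_mul_shiftedTheta {z : ℝ} (hz : |z| = 1) (hq0 : 0 < q) (hq1 : q < 1)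
    (c d : ℝ) :
    shiftedTheta z c q * shiftedTheta z d q
      = shiftedTheta 1 ((c + d) / 2) (q ^ 2) * shiftedTheta 1 ((c - d) / 2) (q ^ 2)
        + z * (shiftedTheta 1 ((c + d + 1) / 2) (q ^ 2)
          * shiftedTheta 1 ((c - d + 1) / 2) (q ^ 2)) := by
  have hz2 : z ^ 2 = 1 := by rw [← sq_abs, hz, one_pow]
  have hz0 : z ≠ 0 := by rintro rfl; simp at hz
  have hsign : ∀ a b : ℤ, z ^ (a + b) * z ^ (a - b) = 1 := fun a b => by
    rw [← zpow_add₀ hz0, show a + b + (a - b) = 2 * a by ring, zpow_mul, zpow_two, ← sq, hz2,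
      one_zpow]
  have hsign' : ∀ a b : ℤ, z ^ (a + b + 1) * z ^ (a - b) = z := fun a b => by
    rw [zpow_add_one₀ hz0, mul_right_comm, hsign, one_mul]
  have hq20 : 0 < q ^ 2 := by positivity
  have hq21 : q ^ 2 < 1 := by nlinarith
  have hnorm := summable_norm_shiftedTheta abs_one hq20 hq21
  unfold shiftedTheta
  rw [tsum_mul_tsum_eq_tsum_add_sub (summable_norm_shiftedTheta hz hq0 hq1 c)
      (summable_norm_shiftedTheta hz hq0 hq1 d),
    tsum_mul_tsum_of_summable_norm (hnorm _) (hnorm _),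
    tsum_mul_tsum_of_summable_norm (hnorm _) (hnorm _), ← tsum_mul_left]
  congr 1 <;> refine tsum_congr fun p => ?_ <;>
    rw [one_zpow, one_zpow, one_mul, one_mul, mul_mul_mul_comm]
  · rw [hsign, one_mul]
    exact rpow_mul_rpow_eq_sq_rpow_mul_sq_rpow hq0 (by push_cast; ring)
  · rw [hsign']
    congr 1
    exact rpow_mul_rpow_eq_sq_rpow_mul_sq_rpow hq0 (by push_cast; ring)

lemma shiftedTheta_one_add_one (c q : ℝ) : shiftedTheta 1 (c + 1) q = shiftedTheta 1 c q := by
  unfold shiftedTheta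
  conv_rhs => rw [← (Equiv.addRight (1 : ℤ)).tsum_eq]
  refine tsum_congr fun n => ?_
  simp only [Equiv.coe_addRight, one_zpow, Int.cast_add, Int.cast_one, add_assoc, add_comm c]

lemma theta3R_eq_shiftedTheta (q : ℝ) : theta3R q = shiftedTheta 1 0 q := by
  simp [theta3R, shiftedTheta]

lemma theta2R_eq_shiftedTheta (q : ℝ) : theta2R q = shiftedTheta 1 (1 / 2) q := by
  simp [theta2R, shiftedTheta]

lemma theta4R_eq_shiftedTheta (q : ℝ) : theta4R q = shiftedTheta (-1) 0 q := by
  simp [theta4R, shiftedTheta]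

lemma theta3R_pos (hq0 : 0 < q) (hq1 : q < 1) : 0 < theta3R q := by
  simpa [theta3R] using (summable_rpow_intCast_add_sq hq0 hq1 0).tsum_pos
    (fun n => rpow_nonneg hq0.le _) 0 (rpow_pos_of_pos hq0 _)

section duplication

variable (hq0 : 0 < q) (hq1 : q < 1)
include hq0 hq1

lemma theta3R_sq : theta3R q ^ 2 = theta3R (q ^ 2) ^ 2 + theta2R (q ^ 2) ^ 2 := by
  rw [theta3R_eq_shiftedTheta, theta3R_eq_shiftedTheta, theta2R_eq_shiftedTheta, sq,
    shiftedTheta_mul_shiftedTheta abs_one hq0 hq1]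
  norm_num
  ring

lemma theta4R_sq : theta4R q ^ 2 = theta3R (q ^ 2) ^ 2 - theta2R (q ^ 2) ^ 2 := by
  rw [theta4R_eq_shiftedTheta, theta3R_eq_shiftedTheta, theta2R_eq_shiftedTheta, sq,
    shiftedTheta_mul_shiftedTheta (by rw [abs_neg, abs_one]) hq0 hq1]
  norm_num
  ring

lemma theta2R_sq : theta2R q ^ 2 = 2 * theta2R (q ^ 2) * theta3R (q ^ 2) := by
  rw [theta2R_eq_shiftedTheta, theta2R_eq_shiftedTheta, theta3R_eq_shiftedTheta, sq,
    shiftedTheta_mul_shiftedTheta abs_one hq0 hq1]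
  have hshift := shiftedTheta_one_add_one 0 (q ^ 2)
  norm_num at hshift ⊢
  rw [hshift]
  ring

end duplication

end

theorem stmt10 (q : ℝ) (hq0 : 0 < q) (hq1 : q < 1) :
    (theta2R q ^ 2 / theta3R q ^ 2) ^ 2 + (theta4R q ^ 2 / theta3R q ^ 2) ^ 2 = 1 := by
  have hθ3 : theta3R q ^ 2 ≠ 0 := (pow_pos (theta3R_pos hq0 hq1) 2).ne'
  rw [div_pow, div_pow, ← add_div, div_eq_one_iff_eq (pow_ne_zero 2 hθ3), theta2R_sq hq0 hq1,
    theta4R_sq hq0 hq1, theta3R_sq hq0 hq1]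
  ring
end
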